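/- arXiv:2512.03960 — 2 statements merged into one kernel-verified Lean document; each statement's English description precedes it below -/
import Mathlib

section
/- Let G be a graph with no cycle of length at most 8, and let v₁, v₂, …, v_k be a closed walk in G (edges v_i v_{i+1} for 1 ≤ i < k and edge v_k v₁) with k even and k ≤ 8, such that the odd-indexed vertices v₁, v₃, …, v_{k−1} are pairwise distinct. Then all even-indexed vertices are equal: v₂ = v₄ = ⋯ = v_k. -/
open SimpleGraph

section Aux
variable {V : Type*} {G : SimpleGraph V}

private lemma noC3 (hg : ∀ (u : V) (c : G.Walk u u), c.IsCycle → 8 < c.length)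
    {a b c : V} (h1 : G.Adj a b) (h2 : G.Adj b c) (h3 : G.Adj c a) : False := by
  have hcyc : (Walk.cons h1 (Walk.cons h2 (Walk.cons h3 Walk.nil))).IsCycle := by
    simp [Walk.isCycle_def, Walk.isTrail_def, List.Nodup, h1.ne, h2.ne, h3.ne, h1.ne', h2.ne',
      h3.ne']
  have := hg a _ hcyc
  simp at this

private lemma noC4 (hg : ∀ (u : V) (c : G.Walk u u), c.IsCycle → 8 < c.length)
    {a b c d : V} (h1 : G.Adj a b) (h2 : G.Adj b c) (h3 : G.Adj c d) (h4 : G.Adj d a)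
    (hac : a ≠ c) (hbd : b ≠ d) : False := by
  have hcyc : (Walk.cons h1 (Walk.cons h2 (Walk.cons h3 (Walk.cons h4 Walk.nil)))).IsCycle := by
    simp [Walk.isCycle_def, Walk.isTrail_def, List.Nodup, h1.ne, h2.ne, h3.ne, h4.ne,
      h1.ne', h2.ne', h3.ne', h4.ne', hac, hbd, hac.symm, hbd.symm]
  have := hg a _ hcyc
  simp at this

/-- midpoint uniqueness -/
private lemma midU (hg : ∀ (u : V) (c : G.Walk u u), c.IsCycle → 8 < c.length)
    {x y m m' : V} (h1 : G.Adj x m) (h2 : G.Adj m y) (h3 : G.Adj x m') (h4 : G.Adj m' y)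
    (hxy : x ≠ y) : m = m' := by
  by_contra hmm
  exact noC4 hg h1 h2 h4.symm h3.symm hxy hmm

private lemma noC5 (hg : ∀ (u : V) (c : G.Walk u u), c.IsCycle → 8 < c.length)
    {a b c d e : V} (h1 : G.Adj a b) (h2 : G.Adj b c) (h3 : G.Adj c d) (h4 : G.Adj d e)
    (h5 : G.Adj e a)
    (hac : a ≠ c) (had : a ≠ d) (hbd : b ≠ d) (hbe : b ≠ e) (hce : c ≠ e) : False := by
  have hcyc : (Walk.cons h1 (Walk.cons h2 (Walk.cons h3 (Walk.cons h4
      (Walk.cons h5 Walk.nil))))).IsCycle := by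
    simp [Walk.isCycle_def, Walk.isTrail_def, List.Nodup, h1.ne, h2.ne, h3.ne, h4.ne, h5.ne,
      h1.ne', h2.ne', h3.ne', h4.ne', h5.ne', hac, had, hbd, hbe, hce,
      hac.symm, had.symm, hbd.symm, hbe.symm, hce.symm]
  have := hg a _ hcyc
  simp at this

private lemma noC6 (hg : ∀ (u : V) (c : G.Walk u u), c.IsCycle → 8 < c.length)
    {a b c d e f : V} (h1 : G.Adj a b) (h2 : G.Adj b c) (h3 : G.Adj c d) (h4 : G.Adj d e)
    (h5 : G.Adj e f) (h6 : G.Adj f a)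
    (hac : a ≠ c) (had : a ≠ d) (hae : a ≠ e) (hbd : b ≠ d) (hbe : b ≠ e) (hbf : b ≠ f)
    (hce : c ≠ e) (hcf : c ≠ f) (hdf : d ≠ f) : False := by
  have hcyc : (Walk.cons h1 (Walk.cons h2 (Walk.cons h3 (Walk.cons h4 (Walk.cons h5
      (Walk.cons h6 Walk.nil)))))).IsCycle := by
    simp [Walk.isCycle_def, Walk.isTrail_def, List.Nodup, h1.ne, h2.ne, h3.ne, h4.ne, h5.ne,
      h6.ne, h1.ne', h2.ne', h3.ne', h4.ne', h5.ne', h6.ne',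
      hac, had, hae, hbd, hbe, hbf, hce, hcf, hdf,
      hac.symm, had.symm, hae.symm, hbd.symm, hbe.symm, hbf.symm, hce.symm, hcf.symm, hdf.symm]
  have := hg a _ hcyc
  simp at this

private lemma noC8 (hg : ∀ (u : V) (c : G.Walk u u), c.IsCycle → 8 < c.length)
    {a b c d e f g h : V} (h1 : G.Adj a b) (h2 : G.Adj b c) (h3 : G.Adj c d) (h4 : G.Adj d e)
    (h5 : G.Adj e f) (h6 : G.Adj f g) (h7 : G.Adj g h) (h8 : G.Adj h a)
    (hac : a ≠ c) (had : a ≠ d) (hae : a ≠ e) (haf : a ≠ f) (hag : a ≠ g)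
    (hbd : b ≠ d) (hbe : b ≠ e) (hbf : b ≠ f) (hbg : b ≠ g) (hbh : b ≠ h)
    (hce : c ≠ e) (hcf : c ≠ f) (hcg : c ≠ g) (hch : c ≠ h)
    (hdf : d ≠ f) (hdg : d ≠ g) (hdh : d ≠ h)
    (heg : e ≠ g) (heh : e ≠ h) (hfh : f ≠ h) : False := by
  have hcyc : (Walk.cons h1 (Walk.cons h2 (Walk.cons h3 (Walk.cons h4 (Walk.cons h5
      (Walk.cons h6 (Walk.cons h7 (Walk.cons h8 Walk.nil)))))))).IsCycle := by
    simp [Walk.isCycle_def, Walk.isTrail_def, List.Nodup, h1.ne, h2.ne, h3.ne, h4.ne, h5.ne,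
      h6.ne, h7.ne, h8.ne, h1.ne', h2.ne', h3.ne', h4.ne', h5.ne', h6.ne', h7.ne', h8.ne',
      hac, had, hae, haf, hag, hbd, hbe, hbf, hbg, hbh, hce, hcf, hcg, hch,
      hdf, hdg, hdh, heg, heh, hfh,
      hac.symm, had.symm, hae.symm, haf.symm, hag.symm, hbd.symm, hbe.symm, hbf.symm, hbg.symm,
      hbh.symm, hce.symm, hcf.symm, hcg.symm, hch.symm, hdf.symm, hdg.symm, hdh.symm,
      heg.symm, heh.symm, hfh.symm]
  have := hg a _ hcyc
  norm_num at this

/-- closed 6-walk with distinct even vertices: midpoints all equal -/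
private lemma six (hg : ∀ (u : V) (c : G.Walk u u), c.IsCycle → 8 < c.length)
    {a0 a1 a2 a3 a4 a5 : V}
    (e01 : G.Adj a0 a1) (e12 : G.Adj a1 a2) (e23 : G.Adj a2 a3) (e34 : G.Adj a3 a4)
    (e45 : G.Adj a4 a5) (e50 : G.Adj a5 a0)
    (h02 : a0 ≠ a2) (h04 : a0 ≠ a4) (h24 : a2 ≠ a4) : a1 = a3 ∧ a3 = a5 := by
  by_cases h13 : a1 = a3
  · subst h13
    exact ⟨rfl, (midU hg e45 e50 e34.symm e01.symm h04.symm).symm⟩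
  exfalso
  by_cases h35 : a3 = a5
  · subst h35
    exact absurd (midU hg e12.symm e01.symm e23 e50 h02.symm) h13
  by_cases h15 : a1 = a5
  · subst h15
    exact absurd (midU hg e12.symm e45.symm e23 e34 h24) h13
  have h14 : a1 ≠ a4 := by intro h; subst h; exact noC3 hg e12 e23 e34
  have h30 : a3 ≠ a0 := by intro h; subst h; exact noC3 hg e01 e12 e23
  have h52 : a5 ≠ a2 := by intro h; subst h; exact noC3 hg e23 e34 e45
  exact noC6 hg e01 e12 e23 e34 e45 e50 h02 h30.symm h04 h13 h14 h15 h24 h52.symm h35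

private lemma eight (hg : ∀ (u : V) (c : G.Walk u u), c.IsCycle → 8 < c.length)
    {a0 a1 a2 a3 a4 a5 a6 a7 : V}
    (e01 : G.Adj a0 a1) (e12 : G.Adj a1 a2) (e23 : G.Adj a2 a3) (e34 : G.Adj a3 a4)
    (e45 : G.Adj a4 a5) (e56 : G.Adj a5 a6) (e67 : G.Adj a6 a7) (e70 : G.Adj a7 a0)
    (h02 : a0 ≠ a2) (h04 : a0 ≠ a4) (h06 : a0 ≠ a6) (h24 : a2 ≠ a4) (h26 : a2 ≠ a6)
    (h46 : a4 ≠ a6) : a1 = a3 ∧ a3 = a5 ∧ a5 = a7 := by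
  by_cases h13 : a1 = a3
  · subst h13
    obtain ⟨p, q⟩ := six hg e01 e34 e45 e56 e67 e70 h04 h06 h46
    exact ⟨rfl, p, q⟩
  exfalso
  by_cases h35 : a3 = a5
  · subst h35
    obtain ⟨p, q⟩ := six hg e23 e56 e67 e70 e01 e12 h26 h02.symm h06.symm
    exact absurd (q.symm.trans p.symm) h13
  by_cases h57 : a5 = a7
  · subst h57
    obtain ⟨p, q⟩ := six hg e45 e70 e01 e12 e23 e34 h04.symm h24.symm h02
    exact absurd q h13
  by_cases h17 : a1 = a7
  · subst h17
    obtain ⟨p, q⟩ := six hg e67 e12 e23 e34 e45 e56 h26.symm h46.symm h24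
    exact absurd p h13
  by_cases h15 : a1 = a5
  · subst h15
    exact absurd (midU hg e12.symm e45.symm e23 e34 h24) h13
  by_cases h37 : a3 = a7
  · subst h37
    exact absurd (midU hg e45 e56 e34.symm e67.symm h46).symm h35
  have h14 : a1 ≠ a4 := by intro h; subst h; exact noC3 hg e12 e23 e34
  have h36 : a3 ≠ a6 := by intro h; subst h; exact noC3 hg e34 e45 e56
  have h50 : a5 ≠ a0 := by intro h; subst h; exact noC3 hg e56 e67 e70
  have h72 : a7 ≠ a2 := by intro h; subst h; exact noC3 hg e70 e01 e12
  have h25 : a2 ≠ a5 := by intro h; subst h; exact noC3 hg e23 e34 e45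
  have h47 : a4 ≠ a7 := by intro h; subst h; exact noC3 hg e45 e56 e67
  have h16 : a1 ≠ a6 := by
    intro h; subst h; exact noC5 hg e12 e23 e34 e45 e56 h13 h14 h24 h25 h35
  have h30 : a3 ≠ a0 := by
    intro h; subst h; exact noC5 hg e34 e45 e56 e67 e70 h35 h36 h46 h47 h57
  exact noC8 hg e01 e12 e23 e34 e45 e56 e67 e70
    h02 h30.symm h04 h50.symm h06 h13 h14 h15 h16 h17 h24 h25 h26 h72.symm
    h35 h36 h37 h46 h47 h57

end Aux

/-- In a graph with no cycle of length at most 8, any closed walk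
`v 0, v 1, …, v (k-1), v k = v 0` of even length `k ≤ 8` whose even-indexed vertices
(`v 0, v 2, …, v (k-2)`, i.e. the odd-indexed ones in 1-based numbering) are pairwise
distinct has all its odd-indexed vertices equal. -/
theorem stmt5 {V : Type*} (G : SimpleGraph V)
    (hgirth : ∀ (u : V) (c : G.Walk u u), c.IsCycle → 8 < c.length)
    (k : ℕ) (hk : 0 < k) (hke : Even k) (hk8 : k ≤ 8)
    (v : ℕ → V) (hclosed : v k = v 0)
    (hadj : ∀ i < k, G.Adj (v i) (v (i + 1)))
    (hdist : ∀ i < k, ∀ j < k, Even i → Even j → i ≠ j → v i ≠ v j) :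
    ∀ i < k, ∀ j < k, Odd i → Odd j → v i = v j := by
  intro i hi j hj hoi hoj
  interval_cases k
  · exact absurd hke (by decide)
  · interval_cases i <;> interval_cases j <;>
      first
        | rfl
        | exact absurd hoi (by decide)
        | exact absurd hoj (by decide)
  · exact absurd hke (by decide)
  · -- k = 4
    have e01 : G.Adj (v 0) (v 1) := hadj 0 (by norm_num)
    have e12 : G.Adj (v 1) (v 2) := hadj 1 (by norm_num)
    have e23 : G.Adj (v 2) (v 3) := hadj 2 (by norm_num)
    have e30 : G.Adj (v 3) (v 0) := by
      have h := hadj 3 (by norm_num); rw [show (3+1 : ℕ) = 4 from rfl, hclosed] at h; exact h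
    have h13 : v 1 = v 3 := midU hgirth e01 e12 e30.symm e23.symm
      (hdist 0 (by norm_num) 2 (by norm_num) (by decide) (by decide) (by decide))
    interval_cases i <;> interval_cases j <;>
      first
        | rfl
        | exact h13
        | exact h13.symm
        | exact absurd hoi (by decide)
        | exact absurd hoj (by decide)
  · exact absurd hke (by decide)
  · -- k = 6
    have e01 : G.Adj (v 0) (v 1) := hadj 0 (by norm_num)
    have e12 : G.Adj (v 1) (v 2) := hadj 1 (by norm_num)
    have e23 : G.Adj (v 2) (v 3) := hadj 2 (by norm_num)
    have e34 : G.Adj (v 3) (v 4) := hadj 3 (by norm_num)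
    have e45 : G.Adj (v 4) (v 5) := hadj 4 (by norm_num)
    have e50 : G.Adj (v 5) (v 0) := by
      have h := hadj 5 (by norm_num); rw [show (5+1 : ℕ) = 6 from rfl, hclosed] at h; exact h
    obtain ⟨h13, h35⟩ := six hgirth e01 e12 e23 e34 e45 e50
      (hdist 0 (by norm_num) 2 (by norm_num) (by decide) (by decide) (by decide))
      (hdist 0 (by norm_num) 4 (by norm_num) (by decide) (by decide) (by decide))
      (hdist 2 (by norm_num) 4 (by norm_num) (by decide) (by decide) (by decide))
    interval_cases i <;> interval_cases j <;>
      first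
        | rfl
        | exact h13
        | exact h13.symm
        | exact h35
        | exact h35.symm
        | exact (h13.trans h35)
        | exact (h13.trans h35).symm
        | exact absurd hoi (by decide)
        | exact absurd hoj (by decide)
  · exact absurd hke (by decide)
  · -- k = 8
    have e01 : G.Adj (v 0) (v 1) := hadj 0 (by norm_num)
    have e12 : G.Adj (v 1) (v 2) := hadj 1 (by norm_num)
    have e23 : G.Adj (v 2) (v 3) := hadj 2 (by norm_num)
    have e34 : G.Adj (v 3) (v 4) := hadj 3 (by norm_num)
    have e45 : G.Adj (v 4) (v 5) := hadj 4 (by norm_num)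
    have e56 : G.Adj (v 5) (v 6) := hadj 5 (by norm_num)
    have e67 : G.Adj (v 6) (v 7) := hadj 6 (by norm_num)
    have e70 : G.Adj (v 7) (v 0) := by
      have h := hadj 7 (by norm_num); rw [show (7+1 : ℕ) = 8 from rfl, hclosed] at h; exact h
    obtain ⟨h13, h35, h57⟩ := eight hgirth e01 e12 e23 e34 e45 e56 e67 e70
      (hdist 0 (by norm_num) 2 (by norm_num) (by decide) (by decide) (by decide))
      (hdist 0 (by norm_num) 4 (by norm_num) (by decide) (by decide) (by decide))
      (hdist 0 (by norm_num) 6 (by norm_num) (by decide) (by decide) (by decide))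
      (hdist 2 (by norm_num) 4 (by norm_num) (by decide) (by decide) (by decide))
      (hdist 2 (by norm_num) 6 (by norm_num) (by decide) (by decide) (by decide))
      (hdist 4 (by norm_num) 6 (by norm_num) (by decide) (by decide) (by decide))
    interval_cases i <;> interval_cases j <;>
      first
        | rfl
        | exact h13
        | exact h13.symm
        | exact h35
        | exact h35.symm
        | exact h57
        | exact h57.symm
        | exact (h13.trans h35)
        | exact (h13.trans h35).symm
        | exact (h35.trans h57)
        | exact (h35.trans h57).symm
        | exact ((h13.trans h35).trans h57)
        | exact ((h13.trans h35).trans h57).symm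
        | exact absurd hoi (by decide)
        | exact absurd hoj (by decide)
end

section
/- Let H be a graph with no cycles of length at most 8, and let H² be its square restricted to distance exactly 2 (u ~ v in H² iff there is a path of length 2 between u and v in H). Then every clique of H² is contained in the neighborhood N_H(v) of some vertex v of H. -/
/-!
Members of an `H²`-clique are pairwise non-adjacent in `H` (no triangles), and two distinct
vertices have at most one common neighbour (no 4-cycles). Given three clique members with
pairwise common neighbours `w, x, y`, either two of these coincide, giving a common neighbour
of all three, or `a w b y c x` is a 6-cycle. So the common neighbour `w` of two fixed members
`a ≠ b` is the common neighbour of `a`, `b` and any third member, hence adjacent to all of them.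
-/

/-- The square of `H` restricted to distance exactly 2:
`u ~ v` iff `u ≠ v` and there is a path of length 2 between `u` and `v` in `H`. -/
def distTwoSquare {V : Type*} (H : SimpleGraph V) : SimpleGraph V where
  Adj u v := u ≠ v ∧ ∃ w, H.Adj u w ∧ H.Adj w v
  symm := ⟨fun u v ⟨huv, w, h1, h2⟩ => ⟨huv.symm, w, h2.symm, h1.symm⟩⟩
  loopless := ⟨fun u h => h.1 rfl⟩

namespace SimpleGraph

variable {V : Type*} {G : SimpleGraph V} {a b c d w x y : V}

lemma egirth_le_three (hab : G.Adj a b) (hbc : G.Adj b c) (hca : G.Adj c a) :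
    G.egirth ≤ 3 := by
  refine egirth_le_length (w := .cons hab (.cons hbc (.cons hca .nil))) ?_
  simp [Walk.cons_isCycle_iff]
  grind [Adj.ne]

lemma egirth_le_four (hab : G.Adj a b) (hbc : G.Adj b c) (hcd : G.Adj c d) (hda : G.Adj d a)
    (hac : a ≠ c) (hbd : b ≠ d) : G.egirth ≤ 4 := by
  refine egirth_le_length (w := .cons hab (.cons hbc (.cons hcd (.cons hda .nil)))) ?_
  simp [Walk.cons_isCycle_iff]
  grind [Adj.ne]

lemma egirth_le_six {e f : V} (hab : G.Adj a b) (hbc : G.Adj b c) (hcd : G.Adj c d)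
    (hde : G.Adj d e) (hef : G.Adj e f) (hfa : G.Adj f a)
    (hac : a ≠ c) (had : a ≠ d) (hae : a ≠ e) (hbd : b ≠ d) (hbe : b ≠ e) (hbf : b ≠ f)
    (hce : c ≠ e) (hcf : c ≠ f) (hdf : d ≠ f) : G.egirth ≤ 6 := by
  refine egirth_le_length
    (w := .cons hab (.cons hbc (.cons hcd (.cons hde (.cons hef (.cons hfa .nil)))))) ?_
  simp [Walk.cons_isCycle_iff]
  grind [Adj.ne]

lemma not_adj_of_distTwoSquare_adj (hG : 4 ≤ G.egirth) (hab : (distTwoSquare G).Adj a b) :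
    ¬G.Adj a b := by
  obtain ⟨-, w, haw, hwb⟩ := hab
  intro hab
  have := hG.trans (egirth_le_three haw hwb hab.symm)
  norm_num at this

lemma eq_of_adj_of_adj (hG : 5 ≤ G.egirth) (hab : a ≠ b) (hax : G.Adj a x) (hxb : G.Adj x b)
    (hay : G.Adj a y) (hyb : G.Adj y b) : x = y := by
  by_contra hxy
  have := hG.trans (egirth_le_four hax hxb hyb.symm hay.symm hab hxy)
  norm_num at this

lemma exists_adj_adj_adj_of_distTwoSquare_adj (hG : 7 ≤ G.egirth)
    (hab : (distTwoSquare G).Adj a b) (hac : (distTwoSquare G).Adj a c)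
    (hbc : (distTwoSquare G).Adj b c) : ∃ v, G.Adj a v ∧ G.Adj b v ∧ G.Adj c v := by
  have hG4 : 4 ≤ G.egirth := le_trans (by norm_num) hG
  obtain ⟨hab', w, haw, hwb⟩ := hab
  obtain ⟨hac', x, hax, hxc⟩ := hac
  obtain ⟨hbc', y, hby, hyc⟩ := hbc
  by_cases hwx : w = x
  · exact ⟨w, haw, hwb.symm, hwx ▸ hxc.symm⟩
  by_cases hwy : w = y
  · exact ⟨w, haw, hwb.symm, hwy ▸ hyc.symm⟩
  by_cases hxy : x = y
  · exact ⟨x, hax, hxy ▸ hby, hxc.symm⟩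
  exfalso
  have hwc : w ≠ c := fun h => not_adj_of_distTwoSquare_adj hG4 ⟨hac', x, hax, hxc⟩ (h ▸ haw)
  have hxb : x ≠ b := fun h => not_adj_of_distTwoSquare_adj hG4 ⟨hab', w, haw, hwb⟩ (h ▸ hax)
  have hya : y ≠ a := fun h => not_adj_of_distTwoSquare_adj hG4 ⟨hab', w, haw, hwb⟩ (h ▸ hby).symm
  have := hG.trans (egirth_le_six haw hwb hby hyc hxc.symm hax.symm
    hab' (Ne.symm hya) hac' hwy hwc hwx hbc' (Ne.symm hxb) (Ne.symm hxy))
  norm_num at this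

lemma IsClique.subset_neighborSet_of_distTwoSquare (hG : 7 ≤ G.egirth) {s : Set V}
    (hs : (distTwoSquare G).IsClique s) (ha : a ∈ s) (hb : b ∈ s) (hab : a ≠ b)
    (haw : G.Adj a w) (hwb : G.Adj w b) : s ⊆ G.neighborSet w := by
  intro c hc
  by_cases hca : c = a
  · exact hca ▸ haw.symm
  by_cases hcb : c = b
  · exact hcb ▸ hwb
  obtain ⟨v, hav, hbv, hcv⟩ := exists_adj_adj_adj_of_distTwoSquare_adj hG (hs ha hb hab)
    (hs ha hc (Ne.symm hca)) (hs hb hc (Ne.symm hcb))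
  rw [mem_neighborSet, eq_of_adj_of_adj (le_trans (by norm_num) hG) hab haw hwb hav hbv.symm]
  exact hcv.symm

end SimpleGraph

/-- If `H` has no cycles of length at most 8 (and every vertex has a neighbor), then every
clique of the square `H²` is contained in the neighborhood `N_H(v)` of some vertex `v`. -/
theorem stmt6 {V : Type*} [Nonempty V] (H : SimpleGraph V)
    (hgirth : ∀ (u : V) (c : H.Walk u u), c.IsCycle → 8 < c.length)
    (hdeg : ∀ u : V, ∃ w, H.Adj u w) :
    ∀ s : Set V, (distTwoSquare H).IsClique s → ∃ v : V, s ⊆ H.neighborSet v := by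
  intro s hs
  have hG : 7 ≤ H.egirth := SimpleGraph.le_egirth.2 fun u c hc => by
    have := hgirth u c hc
    exact_mod_cast (by omega : 7 ≤ c.length)
  rcases s.subsingleton_or_nontrivial with hsub | ⟨a, ha, b, hb, hab⟩
  · rcases hsub.eq_empty_or_singleton with rfl | ⟨a, rfl⟩
    · exact ⟨Classical.arbitrary V, Set.empty_subset _⟩
    · obtain ⟨w, haw⟩ := hdeg a
      exact ⟨w, Set.singleton_subset_iff.2 haw.symm⟩
  · obtain ⟨-, w, haw, hwb⟩ := hs ha hb hab
    exact ⟨w, hs.subset_neighborSet_of_distTwoSquare hG ha hb hab haw hwb⟩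
end
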